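/- Let β > 3 and let x_s ∈ (0,1/3) satisfy ξ(x_s) = β. Consider F_{β,0} (the free energy with J = 0) on D. Then the set of global minimizers of F_{β,0} on D consists of exactly the nine points (a₁,a₂,b₁,b₂) where (a₁,a₂) and (b₁,b₂) each range over the three pairs (x_s, x_s), (x_s, 1−2x_s), (1−2x_s, x_s); moreover, (1/3, 1/3, 1/3, 1/3) is a local maximum of F_{β,0}. -/

import Mathlib

/-!
With `J = 0` the free energy splits as `E(x₁, x₂) + E(y₁, y₂)`, where
`E(a, b) = φ(a) + φ(b) + φ(1 - a - b)` and `φ(t) = -t²/2 + T t log t`, `T = 1/β`. A minimizer of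
`E` on the closed triangle exists by compactness, and it cannot be improved by transferring mass
between two of its three coordinates. Since `φ'(0⁺) = -∞`, no coordinate vanishes; so all three
share the same value of `φ'`. Now `φ'` increases on `(0, T]` and decreases on `[T, ∞)`, and `φ` is
strictly concave on `[T, ∞)`, so no two coordinates can be equal and above `T`. As `3T < 1`, two
coordinates equal some `p < T` and the third is `1 - 2p`, where `φ'(p) = φ'(1 - 2p)`, which is
`ξ(p) = β`. This equation has one root in `(0, 1/3)`: `g(p) = φ'(1 - 2p) - φ'(p)` is increasing on
`[1/4, 1/3]` with `g(1/3) = 0`, and convex on `(0, 1/4]`.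

Near the centre every coordinate exceeds `T`, where `φ` is concave, and Jensen's inequality gives
the local maximum.
-/

open Real Set

/-- ξ(x) = (1/(1−3x)) log((1−2x)/x), continuously extended by ξ(1/3) = 3. -/
noncomputable def xi (x : ℝ) : ℝ :=
  if x = 1 / 3 then 3 else (1 / (1 - 3 * x)) * Real.log ((1 - 2 * x) / x)

/-- The three-spin (q = 3) two-component Curie–Weiss–Potts free energy on coordinates
(x₁, x₂, y₁, y₂), with x₃ = 1 − x₁ − x₂ and y₃ = 1 − y₁ − y₂. -/
noncomputable def F3 (β J : ℝ) (x : Fin 4 → ℝ) : ℝ :=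
  -(1 / 2) * ((x 0) ^ 2 + (x 1) ^ 2 + (1 - x 0 - x 1) ^ 2
      + (x 2) ^ 2 + (x 3) ^ 2 + (1 - x 2 - x 3) ^ 2)
    - J * (x 0 * x 2 + x 1 * x 3 + (1 - x 0 - x 1) * (1 - x 2 - x 3))
    + ((1 + J) / β) * (x 0 * Real.log (x 0) + x 1 * Real.log (x 1)
        + (1 - x 0 - x 1) * Real.log (1 - x 0 - x 1)
        + x 2 * Real.log (x 2) + x 3 * Real.log (x 3)
        + (1 - x 2 - x 3) * Real.log (1 - x 2 - x 3))

/-- The open domain D: product of two open 2-simplices. -/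
def D3 : Set (Fin 4 → ℝ) :=
  {x | 0 < x 0 ∧ 0 < x 1 ∧ 0 < x 2 ∧ 0 < x 3 ∧ x 0 + x 1 < 1 ∧ x 2 + x 3 < 1}

open Filter Topology

noncomputable def potential (T t : ℝ) : ℝ := -(t ^ 2) / 2 + T * (t * log t)

noncomputable def potentialDeriv (T t : ℝ) : ℝ := -t + T * log t + T

section Potential

variable {T : ℝ}

lemma hasDerivAt_potential {t : ℝ} (ht : t ≠ 0) :
    HasDerivAt (potential T) (potentialDeriv T t) t := by
  have := ((hasDerivAt_pow 2 t).fun_neg.div_const 2).fun_add ((hasDerivAt_mul_log ht).const_mul T)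
  exact this.congr_deriv (by rw [potentialDeriv]; ring)

@[fun_prop]
lemma continuous_potential : Continuous (potential T) := by
  unfold potential; fun_prop

lemma hasDerivAt_potentialDeriv {t : ℝ} (ht : t ≠ 0) :
    HasDerivAt (potentialDeriv T) (T / t - 1) t := by
  have := ((hasDerivAt_id t).fun_neg.fun_add ((hasDerivAt_log ht).const_mul T)).add_const T
  exact this.congr_deriv (by ring)

lemma strictMonoOn_potentialDeriv : StrictMonoOn (potentialDeriv T) (Ioc 0 T) := by
  refine strictMonoOn_of_hasDerivWithinAt_pos (convex_Ioc 0 T)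
    (fun t ht => (hasDerivAt_potentialDeriv ht.1.ne').continuousAt.continuousWithinAt)
    (fun t ht => (hasDerivAt_potentialDeriv ?_).hasDerivWithinAt) fun t ht => ?_
  all_goals rw [interior_Ioc] at ht
  · exact ht.1.ne'
  · rw [sub_pos, one_lt_div ht.1]; exact ht.2

variable (hT : 0 < T)
include hT

lemma strictAntiOn_potentialDeriv : StrictAntiOn (potentialDeriv T) (Ici T) := by
  refine strictAntiOn_of_hasDerivWithinAt_neg (convex_Ici T)
    (fun t ht => (hasDerivAt_potentialDeriv (hT.trans_le ht).ne').continuousAt.continuousWithinAt)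
    (fun t ht => (hasDerivAt_potentialDeriv ?_).hasDerivWithinAt) fun t ht => ?_
  all_goals rw [interior_Ici] at ht
  · exact (hT.trans ht).ne'
  · rw [sub_neg, div_lt_one (hT.trans ht)]; exact ht

lemma strictConcaveOn_potential : StrictConcaveOn ℝ (Ici T) (potential T) := by
  refine StrictAntiOn.strictConcaveOn_of_deriv (convex_Ici T) continuous_potential.continuousOn ?_
  rw [interior_Ici]
  refine ((strictAntiOn_potentialDeriv hT).mono Ioi_subset_Ici_self).congr fun t ht => ?_
  exact ((hasDerivAt_potential (hT.trans ht).ne').deriv).symm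

end Potential

def TransferStable (T x y : ℝ) : Prop :=
  ∀ t, 0 ≤ x + t → 0 ≤ y - t →
    potential T x + potential T y ≤ potential T (x + t) + potential T (y - t)

namespace TransferStable

variable {T x y : ℝ}

lemma symm (h : TransferStable T x y) : TransferStable T y x := fun t hy hx => by
  have := h (-t) (by linarith) (by linarith)
  rw [sub_neg_eq_add, ← sub_eq_add_neg] at this
  linarith

lemma potentialDeriv_eq (h : TransferStable T x y) (hx : 0 < x) (hy : 0 < y) :
    potentialDeriv T x = potentialDeriv T y := by
  have hmin : IsLocalMin (fun t => potential T (x + t) + potential T (y - t)) 0 := by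
    filter_upwards [Ioo_mem_nhds (neg_neg_of_pos hx) hy] with t ht
    simpa using h t (by linarith [ht.1]) (by linarith [ht.2])
  have hderiv : HasDerivAt (fun t => potential T (x + t) + potential T (y - t))
      (potentialDeriv T x + -potentialDeriv T y) 0 :=
    (HasDerivAt.comp_const_add x 0 (by simpa using hasDerivAt_potential hx.ne')).add
      (HasDerivAt.comp_const_sub y 0 (by simpa using hasDerivAt_potential hy.ne'))
  linarith [hmin.hasDerivAt_eq_zero hderiv]

lemma not_self (hT : 0 < T) (hx : T < x) : ¬ TransferStable T x x := fun h => by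
  have hmid := (strictConcaveOn_potential hT).2 self_mem_Ici (show T ≤ 2 * x - T by linarith)
    (by linarith : T ≠ 2 * x - T) (by norm_num : (0 : ℝ) < 1 / 2) (by norm_num : (0 : ℝ) < 1 / 2)
    (by norm_num)
  have := h (x - T) (by linarith) (by linarith)
  simp only [smul_eq_mul] at hmid
  rw [show 1 / 2 * T + 1 / 2 * (2 * x - T) = x by ring] at hmid
  rw [show x + (x - T) = 2 * x - T by ring, show x - (x - T) = T by ring] at this
  linarith

lemma not_zero_left (hT : 0 < T) (hy : 0 < y) : ¬ TransferStable T 0 y := fun h => by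
  -- chosen so that `T log s < T log (y - s) - y` for `s ∈ (0, t)`: the derivative is negative there
  set t := y / 2 * exp (-(y / T)) with ht_def
  have ht : 0 < t := by positivity
  have hty : t ≤ y / 2 :=
    mul_le_of_le_one_right (by positivity) (exp_le_one_iff.2 (by simp; positivity))
  set f := fun s => potential T s + potential T (y - s)
  obtain ⟨s, hs, hslope⟩ := exists_hasDerivAt_eq_slope f
    (fun s => potentialDeriv T s + -potentialDeriv T (y - s)) ht
    (continuous_potential.add (continuous_potential.comp (continuous_sub_left y))).continuousOn
    fun s hs => (hasDerivAt_potential hs.1.ne').add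
      (HasDerivAt.comp_const_sub y s (hasDerivAt_potential (by linarith [hs.2])))
  have hlog_s : log s < log (y / 2) - y / T := by
    calc log s < log t := log_lt_log hs.1 hs.2
      _ = log (y / 2) - y / T := by
        rw [ht_def, log_mul (by positivity) (exp_pos _).ne', log_exp]; ring
  have hlog_ys : log (y / 2) ≤ log (y - s) := log_le_log (by positivity) (by linarith [hs.2])
  have hTlog : T * log s - T * log (y - s) < -y := by
    have := mul_lt_mul_of_pos_left (show log s - log (y - s) < -(y / T) by linarith) hT
    rwa [mul_sub, mul_neg, mul_div_cancel₀ y hT.ne'] at this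
  have hderiv_neg : potentialDeriv T s + -potentialDeriv T (y - s) < 0 := by
    simp only [potentialDeriv]; linarith [hs.1]
  have hstable : f 0 ≤ f t := by simpa [f] using h t (by linarith) (by linarith)
  have : 0 ≤ (f t - f 0) / (t - 0) := div_nonneg (by linarith) (by linarith)
  linarith

end TransferStable

noncomputable def gap (T p : ℝ) : ℝ := potentialDeriv T (1 - 2 * p) - potentialDeriv T p

section Gap

variable {T : ℝ}

lemma hasDerivAt_gap {p : ℝ} (hp : 0 < p) (hp2 : p < 1 / 2) :
    HasDerivAt (gap T) (3 - T / (p * (1 - 2 * p))) p := by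
  have hp2' : 1 - 2 * p ≠ 0 := by linarith
  have := ((hasDerivAt_potentialDeriv (T := T) hp2').comp p
    (((hasDerivAt_id p).const_mul 2).const_sub 1)).sub
      (hasDerivAt_potentialDeriv (T := T) hp.ne')
  exact this.congr_deriv (by field_simp; ring)

lemma gap_one_third : gap T (1 / 3) = 0 := by norm_num [gap]

lemma gap_neg_of_mem_Ico (hT3 : T < 1 / 3) {p : ℝ} (hp : p ∈ Ico (1 / 4 : ℝ) (1 / 3)) :
    gap T p < 0 := by
  have hmono : StrictMonoOn (gap T) (Icc (1 / 4) (1 / 3)) := by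
    refine strictMonoOn_of_hasDerivWithinAt_pos (f' := fun q => 3 - T / (q * (1 - 2 * q)))
      (convex_Icc _ _)
      (fun q hq => (hasDerivAt_gap (by linarith [hq.1]) (by linarith [hq.2])).continuousAt
        |>.continuousWithinAt)
      (fun q hq => ?_) fun q hq => ?_
    all_goals rw [interior_Icc] at hq
    · exact (hasDerivAt_gap (by linarith [hq.1]) (by linarith [hq.2])).hasDerivWithinAt
    · have hpos : 0 < q * (1 - 2 * q) := mul_pos (by linarith [hq.1]) (by linarith [hq.2])
      rw [sub_pos, div_lt_iff₀ hpos]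
      nlinarith [hq.1, hq.2]
  have := hmono ⟨hp.1, hp.2.le⟩ ⟨by norm_num, le_rfl⟩ hp.2
  rwa [gap_one_third] at this

lemma convexOn_gap (hT : 0 < T) : ConvexOn ℝ (Ioc 0 (1 / 4)) (gap T) := by
  have hderiv : ∀ q ∈ Ioc (0 : ℝ) (1 / 4), HasDerivAt (gap T) (3 - T / (q * (1 - 2 * q))) q :=
    fun q hq => hasDerivAt_gap hq.1 (by linarith [hq.2])
  refine MonotoneOn.convexOn_of_deriv (convex_Ioc _ _)
    (fun q hq => (hderiv q hq).continuousAt.continuousWithinAt) ?_ ?_ <;> rw [interior_Ioc]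
  · exact fun q hq => (hderiv q (Ioo_subset_Ioc_self hq)).differentiableAt.differentiableWithinAt
  · intro p hp q hq hpq
    rw [(hderiv p (Ioo_subset_Ioc_self hp)).deriv, (hderiv q (Ioo_subset_Ioc_self hq)).deriv]
    have hp' : 0 < p * (1 - 2 * p) := mul_pos hp.1 (by linarith [hp.2])
    gcongr 3 - T / ?_
    nlinarith [hq.2]

lemma eq_of_gap_eq_zero (hT : 0 < T) (hT3 : T < 1 / 3) {p q : ℝ}
    (hp : p ∈ Ioo (0 : ℝ) (1 / 3)) (hq : q ∈ Ioo (0 : ℝ) (1 / 3))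
    (hgp : gap T p = 0) (hgq : gap T q = 0) : p = q := by
  wlog hpq : p ≤ q generalizing p q
  · exact (this hq hp hgq hgp (le_of_not_ge hpq)).symm
  have lt_quarter : ∀ r ∈ Ioo (0 : ℝ) (1 / 3), gap T r = 0 → r < 1 / 4 := fun r hr hgr => by
    by_contra! h
    exact (gap_neg_of_mem_Ico hT3 ⟨h, hr.2⟩).ne hgr
  refine hpq.eq_or_lt.resolve_right fun hlt => ?_
  have hq4 := lt_quarter q hq hgq
  -- a convex function vanishing at `p < q` is nonnegative beyond `q`, but `gap T (1/4) < 0`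
  have := (convexOn_gap hT).slope_mono_adjacent ⟨hp.1, (lt_quarter p hp hgp).le⟩
    ⟨by norm_num, le_rfl⟩ hlt hq4
  rw [hgp, hgq, sub_zero, zero_div, sub_zero] at this
  exact this.not_gt (div_neg_of_neg_of_pos (gap_neg_of_mem_Ico hT3 ⟨le_rfl, by norm_num⟩)
    (by linarith))

lemma gap_eq_zero_of_xi_eq {β x : ℝ} (hβ : β ≠ 0) (hx : x ∈ Ioo (0 : ℝ) (1 / 3))
    (hxi : xi x = β) : gap β⁻¹ x = 0 := by
  have h3 : 1 - 3 * x ≠ 0 := by linarith [hx.2]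
  rw [xi, if_neg hx.2.ne, log_div (by linarith [hx.2]) hx.1.ne'] at hxi
  have hL : log (1 - 2 * x) - log x = β * (1 - 3 * x) := by
    rw [← hxi, one_div_mul_eq_div, div_mul_cancel₀ _ h3]
  calc gap β⁻¹ x = 3 * x - 1 + β⁻¹ * (log (1 - 2 * x) - log x) := by
        simp only [gap, potentialDeriv]; ring
    _ = 0 := by rw [hL]; field_simp; ring

end Gap

def phasePoints (u : ℝ) : Set (ℝ × ℝ) := {(u, u), (u, 1 - 2 * u), (1 - 2 * u, u)}

section Classification

variable {T : ℝ}

lemma TransferStable.eq_or_lt_lt (hT : 0 < T) {x y : ℝ} (h : TransferStable T x y)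
    (hx : 0 < x) (hy : 0 < y) : x = y ∧ x ≤ T ∨ x < T ∧ T < y ∨ y < T ∧ T < x := by
  have hd := h.potentialDeriv_eq hx hy
  have hanti := strictAntiOn_potentialDeriv hT
  rcases le_or_gt x T with hxT | hxT <;> rcases le_or_gt y T with hyT | hyT
  · exact Or.inl ⟨strictMonoOn_potentialDeriv.injOn ⟨hx, hxT⟩ ⟨hy, hyT⟩ hd, hxT⟩
  · refine Or.inr (Or.inl ⟨hxT.lt_of_ne fun hxT' => ?_, hyT⟩)
    rw [hxT'] at hd
    exact (hanti self_mem_Ici hyT.le hyT).ne' hd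
  · refine Or.inr (Or.inr ⟨hyT.lt_of_ne fun hyT' => ?_, hxT⟩)
    rw [hyT'] at hd
    exact (hanti self_mem_Ici hxT.le hxT).ne hd
  · obtain rfl := hanti.injOn hxT.le hyT.le hd
    exact absurd h (TransferStable.not_self hT hxT)

lemma exists_mem_phasePoints_of_transferStable (hT : 0 < T) (hT3 : T < 1 / 3) {a b c : ℝ}
    (ha : 0 < a) (hb : 0 < b) (hc : 0 < c) (hsum : a + b + c = 1)
    (hab : TransferStable T a b) (hac : TransferStable T a c) (hbc : TransferStable T b c) :
    ∃ p, 0 < p ∧ p < T ∧ potentialDeriv T p = potentialDeriv T (1 - 2 * p) ∧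
      (a, b) ∈ phasePoints p := by
  rcases hab.eq_or_lt_lt hT ha hb with ⟨rfl, haT⟩ | ⟨haT, hTb⟩ | ⟨hbT, hTa⟩
  · rcases hac.eq_or_lt_lt hT ha hc with ⟨rfl, -⟩ | ⟨haT, hTc⟩ | ⟨hcT, hTa⟩
    · linarith
    · obtain rfl : c = 1 - 2 * a := by linarith
      exact ⟨a, ha, haT, hac.potentialDeriv_eq ha hc, Or.inl rfl⟩
    · linarith
  · rcases hac.eq_or_lt_lt hT ha hc with ⟨rfl, -⟩ | ⟨-, hTc⟩ | ⟨-, hTa⟩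
    · obtain rfl : b = 1 - 2 * a := by linarith
      exact ⟨a, ha, haT, hab.potentialDeriv_eq ha hb, Or.inr (Or.inl rfl)⟩
    · rcases hbc.eq_or_lt_lt hT hb hc with ⟨rfl, h⟩ | ⟨h, -⟩ | ⟨h, -⟩ <;> linarith
    · linarith
  · rcases hbc.eq_or_lt_lt hT hb hc with ⟨rfl, -⟩ | ⟨-, hTc⟩ | ⟨-, hTb⟩
    · obtain rfl : a = 1 - 2 * b := by linarith
      exact ⟨b, hb, hbT, (hab.potentialDeriv_eq ha hb).symm, Or.inr (Or.inr rfl)⟩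
    · rcases hac.eq_or_lt_lt hT ha hc with ⟨rfl, h⟩ | ⟨h, -⟩ | ⟨h, -⟩ <;> linarith
    · linarith

end Classification

noncomputable def simplexEnergy (T a b : ℝ) : ℝ :=
  potential T a + potential T b + potential T (1 - a - b)

def triangle : Set (ℝ × ℝ) := {q | 0 ≤ q.1 ∧ 0 ≤ q.2 ∧ q.1 + q.2 ≤ 1}

lemma isCompact_triangle : IsCompact triangle :=
  (isCompact_Icc (a := ((0 : ℝ), (0 : ℝ))) (b := (1, 1))).of_isClosed_subset
    ((isClosed_le continuous_const continuous_fst).inter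
      ((isClosed_le continuous_const continuous_snd).inter
        (isClosed_le (continuous_fst.add continuous_snd) continuous_const)))
    fun _ ⟨h1, h2, h3⟩ => ⟨⟨h1, h2⟩, by linarith, by linarith⟩

section Minimizers

variable {T : ℝ}

lemma continuous_simplexEnergy : Continuous fun q : ℝ × ℝ => simplexEnergy T q.1 q.2 := by
  unfold simplexEnergy; fun_prop

lemma simplexEnergy_of_mem_phasePoints {u : ℝ} {q : ℝ × ℝ} (hq : q ∈ phasePoints u) :
    simplexEnergy T q.1 q.2 = simplexEnergy T u u := by
  rcases hq with rfl | rfl | rfl <;> simp only [simplexEnergy] <;> ring_nf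

lemma bounds_of_mem_phasePoints {u : ℝ} (hu : u ∈ Ioo (0 : ℝ) (1 / 3)) {q : ℝ × ℝ}
    (hq : q ∈ phasePoints u) : 0 < q.1 ∧ 0 < q.2 ∧ q.1 + q.2 < 1 := by
  obtain ⟨hu0, hu3⟩ := hu
  rcases hq with rfl | rfl | rfl <;> refine ⟨?_, ?_, ?_⟩ <;> dsimp only <;> linarith

lemma transferStable_of_isMinOn {a b : ℝ} (hq : (a, b) ∈ triangle)
    (hmin : IsMinOn (fun q : ℝ × ℝ => simplexEnergy T q.1 q.2) triangle (a, b)) :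
    TransferStable T a b ∧ TransferStable T a (1 - a - b) ∧ TransferStable T b (1 - a - b) := by
  obtain ⟨ha, hb, hab⟩ := hq
  refine ⟨fun t h1 h2 => ?_, fun t h1 h2 => ?_, fun t h1 h2 => ?_⟩
  · have : simplexEnergy T a b ≤ simplexEnergy T (a + t) (b - t) :=
      hmin (show (a + t, b - t) ∈ triangle from ⟨h1, h2, by dsimp only; linarith⟩)
    simp only [simplexEnergy, show 1 - (a + t) - (b - t) = 1 - a - b by ring] at this
    linarith
  · have : simplexEnergy T a b ≤ simplexEnergy T (a + t) b :=
      hmin (show (a + t, b) ∈ triangle from ⟨h1, hb, by dsimp only; linarith⟩)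
    simp only [simplexEnergy, show 1 - (a + t) - b = 1 - a - b - t by ring] at this
    linarith
  · have : simplexEnergy T a b ≤ simplexEnergy T a (b + t) :=
      hmin (show (a, b + t) ∈ triangle from ⟨ha, h1, by dsimp only; linarith⟩)
    simp only [simplexEnergy, show 1 - a - (b + t) = 1 - a - b - t by ring] at this
    linarith

lemma pos_of_transferStable (hT : 0 < T) {x y z : ℝ} (hxy : TransferStable T x y)
    (hxz : TransferStable T x z) (hx : 0 ≤ x) (hy : 0 ≤ y) (hz : 0 ≤ z) (hsum : x + y + z = 1) :
    0 < x := by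
  rcases hx.lt_or_eq with hx | rfl
  · exact hx
  rcases hy.lt_or_eq with hy | rfl
  · exact absurd hxy (TransferStable.not_zero_left hT hy)
  rcases hz.lt_or_eq with hz | rfl
  · exact absurd hxz (TransferStable.not_zero_left hT hz)
  · linarith

variable (hT : 0 < T) (hT3 : T < 1 / 3) {u : ℝ} (hu : u ∈ Ioo (0 : ℝ) (1 / 3)) (hgap : gap T u = 0)
include hT hT3 hu hgap

lemma mem_phasePoints_of_isMinOn {q : ℝ × ℝ} (hq : q ∈ triangle)
    (hmin : IsMinOn (fun q : ℝ × ℝ => simplexEnergy T q.1 q.2) triangle q) :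
    q ∈ phasePoints u := by
  obtain ⟨a, b⟩ := q
  obtain ⟨hab, hac, hbc⟩ := transferStable_of_isMinOn hq hmin
  obtain ⟨ha, hb, hsum⟩ := hq
  have hc : 0 ≤ 1 - a - b := by dsimp only at hsum; linarith
  obtain ⟨p, hp, hpT, hpd, hmem⟩ := exists_mem_phasePoints_of_transferStable hT hT3
    (pos_of_transferStable hT hab hac ha hb hc (by ring))
    (pos_of_transferStable hT hab.symm hbc hb ha hc (by ring))
    (pos_of_transferStable hT hac.symm hbc.symm hc ha hb (by ring)) (by ring) hab hac hbc
  rwa [eq_of_gap_eq_zero hT hT3 ⟨hp, by linarith⟩ hu (sub_eq_zero.2 hpd.symm) hgap] at hmem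

lemma simplexEnergy_self_le {q : ℝ × ℝ} (hq : q ∈ triangle) :
    simplexEnergy T u u ≤ simplexEnergy T q.1 q.2 := by
  obtain ⟨m, hm, hmin⟩ := isCompact_triangle.exists_isMinOn ⟨(0, 0), by simp [triangle]⟩
    continuous_simplexEnergy.continuousOn
  rw [← simplexEnergy_of_mem_phasePoints (mem_phasePoints_of_isMinOn hT hT3 hu hgap hm hmin)]
  exact hmin hq

lemma mem_phasePoints_of_simplexEnergy_le {q : ℝ × ℝ} (hq : q ∈ triangle)
    (hle : simplexEnergy T q.1 q.2 ≤ simplexEnergy T u u) : q ∈ phasePoints u :=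
  mem_phasePoints_of_isMinOn hT hT3 hu hgap hq fun _ hr =>
    hle.trans (simplexEnergy_self_le hT hT3 hu hgap hr)

end Minimizers

lemma simplexEnergy_le_center {T : ℝ} (hT : 0 < T) {a b : ℝ} (ha : T ≤ a) (hb : T ≤ b)
    (hc : T ≤ 1 - a - b) : simplexEnergy T a b ≤ simplexEnergy T (1 / 3) (1 / 3) := by
  have := (strictConcaveOn_potential hT).concaveOn.le_map_sum (t := Finset.univ)
    (w := fun _ : Fin 3 => (1 / 3 : ℝ)) (p := ![a, b, 1 - a - b]) (by simp) (by simp)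
    (by simp [Fin.forall_fin_succ, ha, hb, hc])
  simp only [Fin.sum_univ_three, smul_eq_mul] at this
  simp only [simplexEnergy, Matrix.cons_val] at this ⊢
  rw [show 1 / 3 * a + 1 / 3 * b + 1 / 3 * (1 - a - b) = 1 / 3 by ring] at this
  rw [show (1 : ℝ) - 1 / 3 - 1 / 3 = 1 / 3 by norm_num]
  linarith

lemma F3_zero_eq (β : ℝ) (x : Fin 4 → ℝ) :
    F3 β 0 x = simplexEnergy β⁻¹ (x 0) (x 1) + simplexEnergy β⁻¹ (x 2) (x 3) := by
  simp only [F3, simplexEnergy, potential]; ring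

lemma isLocalMax_F3_zero (β : ℝ) (hβ : 3 < β) : IsLocalMax (F3 β 0) ![1/3, 1/3, 1/3, 1/3] := by
  have hT : 0 < β⁻¹ := by positivity
  have hT3 : β⁻¹ < 1 / 3 := by rw [one_div]; exact inv_strictAnti₀ (by norm_num) hβ
  have near (g : (Fin 4 → ℝ) → ℝ) (hg : Continuous g) (h : β⁻¹ < g ![1/3, 1/3, 1/3, 1/3]) :
      ∀ᶠ x in 𝓝 ![1/3, 1/3, 1/3, 1/3], β⁻¹ ≤ g x :=
    (continuousAt_const.eventually_lt hg.continuousAt h).mono fun _ => le_of_lt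
  have center (i : Fin 4) : (![1/3, 1/3, 1/3, 1/3] : Fin 4 → ℝ) i = 1 / 3 := by
    fin_cases i <;> rfl
  filter_upwards [near (· 0) (by fun_prop) (by rwa [center]),
    near (· 1) (by fun_prop) (by rwa [center]),
    near (fun x => 1 - x 0 - x 1) (by fun_prop) (by rw [center, center]; linarith),
    near (· 2) (by fun_prop) (by rwa [center]),
    near (· 3) (by fun_prop) (by rwa [center]),
    near (fun x => 1 - x 2 - x 3) (by fun_prop) (by rw [center, center]; linarith)]
    with x h0 h1 h01 h2 h3 h23
  rw [F3_zero_eq, F3_zero_eq]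
  exact add_le_add (simplexEnergy_le_center hT h0 h1 h01) (simplexEnergy_le_center hT h2 h3 h23)

lemma isMinOn_F3_zero_iff {β u : ℝ} (hβ : 3 < β) (hu : u ∈ Ioo (0 : ℝ) (1 / 3))
    (hgap : gap β⁻¹ u = 0) (p : Fin 4 → ℝ) :
    (p ∈ D3 ∧ ∀ q ∈ D3, F3 β 0 p ≤ F3 β 0 q) ↔
      (p 0, p 1) ∈ phasePoints u ∧ (p 2, p 3) ∈ phasePoints u := by
  have hT : 0 < β⁻¹ := by positivity
  have hT3 : β⁻¹ < 1 / 3 := by rw [one_div]; exact inv_strictAnti₀ (by norm_num) hβ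
  constructor
  · rintro ⟨⟨h0, h1, h2, h3, h01, h23⟩, hmin⟩
    have hu2 : u + u < 1 := by linarith [hu.2]
    have hleft := hmin ![u, u, p 2, p 3] ⟨hu.1, hu.1, h2, h3, hu2, h23⟩
    have hright := hmin ![p 0, p 1, u, u] ⟨h0, h1, hu.1, hu.1, h01, hu2⟩
    simp only [F3_zero_eq, Matrix.cons_val] at hleft hright
    exact ⟨mem_phasePoints_of_simplexEnergy_le hT hT3 hu hgap ⟨h0.le, h1.le, h01.le⟩ (by linarith),
      mem_phasePoints_of_simplexEnergy_le hT hT3 hu hgap ⟨h2.le, h3.le, h23.le⟩ (by linarith)⟩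
  · rintro ⟨hp01, hp23⟩
    obtain ⟨h0, h1, h01⟩ := bounds_of_mem_phasePoints hu hp01
    obtain ⟨h2, h3, h23⟩ := bounds_of_mem_phasePoints hu hp23
    refine ⟨⟨h0, h1, h2, h3, h01, h23⟩, fun q ⟨g0, g1, g2, g3, g01, g23⟩ => ?_⟩
    rw [F3_zero_eq, F3_zero_eq, simplexEnergy_of_mem_phasePoints hp01,
      simplexEnergy_of_mem_phasePoints hp23]
    exact add_le_add
      (simplexEnergy_self_le hT hT3 hu hgap (q := (q 0, q 1)) ⟨g0.le, g1.le, g01.le⟩)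
      (simplexEnergy_self_le hT hT3 hu hgap (q := (q 2, q 3)) ⟨g2.le, g3.le, g23.le⟩)

lemma ncard_phasePoints {u : ℝ} (hu : u ≠ 1 - 2 * u) : (phasePoints u).ncard = 3 :=
  Set.ncard_eq_three.2 ⟨_, _, _, by simp [hu], by simp [hu], by simp [hu], rfl⟩

lemma ncard_setOf_eq_vecCons {α : Type*} (S : Set (α × α)) :
    {p : Fin 4 → α | ∃ a ∈ S, ∃ b ∈ S, p = ![a.1, a.2, b.1, b.2]}.ncard = S.ncard * S.ncard := by
  have hinj : Function.Injective fun ab : (α × α) × (α × α) => ![ab.1.1, ab.1.2, ab.2.1, ab.2.2] :=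
    fun ab cd h => by
      have h' := congrFun h
      ext <;> [exact h' 0; exact h' 1; exact h' 2; exact h' 3]
  rw [← ncard_prod, ← ncard_image_of_injective _ hinj]
  congr 1
  ext p
  constructor
  · rintro ⟨a, ha, b, hb, rfl⟩
    exact ⟨(a, b), ⟨ha, hb⟩, rfl⟩
  · rintro ⟨⟨a, b⟩, ⟨ha, hb⟩, rfl⟩
    exact ⟨a, ha, b, hb, rfl⟩

/-- for β > 3 and x_s ∈ (0,1/3) with ξ(x_s) = β, the global minimizers
of F_{β,0} on D are exactly the nine points obtained by pairing the three permutations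
(x_s, x_s), (x_s, 1−2x_s), (1−2x_s, x_s) in each component, and (1/3,1/3,1/3,1/3) is a
local maximum of F_{β,0}. -/
theorem stmt_8 (β : ℝ) (hβ : 3 < β)
    (xs : ℝ) (hxs : xs ∈ Ioo (0 : ℝ) (1 / 3)) (hξ : xi xs = β) :
    {p | p ∈ D3 ∧ ∀ q ∈ D3, F3 β 0 p ≤ F3 β 0 q} =
      {p : Fin 4 → ℝ |
        ∃ a ∈ ({(xs, xs), (xs, 1 - 2 * xs), (1 - 2 * xs, xs)} : Set (ℝ × ℝ)),
        ∃ b ∈ ({(xs, xs), (xs, 1 - 2 * xs), (1 - 2 * xs, xs)} : Set (ℝ × ℝ)),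
          p = ![a.1, a.2, b.1, b.2]} ∧
    {p | p ∈ D3 ∧ ∀ q ∈ D3, F3 β 0 p ≤ F3 β 0 q}.ncard = 9 ∧
    IsLocalMax (F3 β 0) ![1/3, 1/3, 1/3, 1/3] := by
  have hgap := gap_eq_zero_of_xi_eq (by linarith) hxs hξ
  have hmin : {p | p ∈ D3 ∧ ∀ q ∈ D3, F3 β 0 p ≤ F3 β 0 q} =
      {p : Fin 4 → ℝ | ∃ a ∈ phasePoints xs, ∃ b ∈ phasePoints xs, p = ![a.1, a.2, b.1, b.2]} := by
    ext p
    rw [mem_ofPred_eq, isMinOn_F3_zero_iff hβ hxs hgap]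
    constructor
    · rintro ⟨h01, h23⟩
      exact ⟨_, h01, _, h23, by ext i; fin_cases i <;> rfl⟩
    · rintro ⟨a, ha, b, hb, rfl⟩
      exact ⟨ha, hb⟩
  refine ⟨hmin, ?_, isLocalMax_F3_zero β hβ⟩
  rw [hmin, ncard_setOf_eq_vecCons, ncard_phasePoints (by linarith [hxs.2])]
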